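/- Let 𝔸 be a countable atomless Boolean algebra, let 𝔄 be a finite subalgebra of 𝔸, and let p : 𝔄 → [0,1] ∩ ℚ be a normalised submeasure. Then there exists an exhaustive normalised submeasure φ : 𝔸 → [0,1] ∩ ℚ extending p. -/
import Mathlib

open Filter Topology

/-- `S` is a (Boolean) subalgebra of the Boolean algebra `A`. -/
def IsBoolSubalgebra {A : Type*} [BooleanAlgebra A] (S : Set A) : Prop :=
  ⊥ ∈ S ∧ ⊤ ∈ S ∧ (∀ x ∈ S, ∀ y ∈ S, x ⊔ y ∈ S) ∧
    (∀ x ∈ S, ∀ y ∈ S, x ⊓ y ∈ S) ∧ (∀ x ∈ S, xᶜ ∈ S)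

lemma exists_prime_ideal_notMem {A : Type*} [BooleanAlgebra A] (a : A) (ha : a ≠ ⊥) :
    ∃ J : Order.Ideal A, J.IsPrime ∧ a ∉ J := by
  have hdisj : Disjoint ((Order.PFilter.principal a : Order.PFilter A) : Set A)
      ((Order.Ideal.principal ⊥ : Order.Ideal A) : Set A) := by
    rw [Set.disjoint_left]
    intro x hx hx'
    have h1 : a ≤ x := hx
    have h2 : x ≤ ⊥ := hx'
    exact ha (le_bot_iff.mp (h1.trans h2))
  obtain ⟨J, hJ, _, hdis⟩ := DistribLattice.prime_ideal_of_disjoint_filter_ideal hdisj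
  refine ⟨J, hJ, fun haJ => ?_⟩
  exact Set.disjoint_left.mp hdis (Order.PFilter.mem_principal.mpr le_rfl) haJ

theorem statement2 (A : Type*) [BooleanAlgebra A] [Countable A] [Nontrivial A]
    (hatomless : ∀ a : A, ¬ IsAtom a)
    (S : Set A) (hS : IsBoolSubalgebra S) (hSfin : S.Finite)
    (p : A → ℝ)
    (hp0 : p ⊥ = 0) (hp1 : p ⊤ = 1)
    (hpmono : ∀ a ∈ S, ∀ b ∈ S, a ≤ b → p a ≤ p b)
    (hpsub : ∀ a ∈ S, ∀ b ∈ S, p (a ⊔ b) ≤ p a + p b)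
    (hprange : ∀ a ∈ S, (0 ≤ p a ∧ p a ≤ 1) ∧ ∃ q : ℚ, p a = (q : ℝ)) :
    ∃ φ : A → ℝ,
      φ ⊥ = 0 ∧ φ ⊤ = 1 ∧
      (∀ a b : A, a ≤ b → φ a ≤ φ b) ∧
      (∀ a b : A, φ (a ⊔ b) ≤ φ a + φ b) ∧
      (∀ a : A, (0 ≤ φ a ∧ φ a ≤ 1) ∧ ∃ q : ℚ, φ a = (q : ℝ)) ∧
      (∀ a ∈ S, φ a = p a) ∧
      (∀ f : ℕ → A, (∀ i j, i ≠ j → f i ⊓ f j = ⊥) →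
        Tendsto (fun n => φ (f n)) atTop (𝓝 0)) := by
  classical
  obtain ⟨hbot, htop, hsup, hinf, hcompl⟩ := hS
  -- choose prime ideals
  have hex : ∀ a : A, ∃ J : Order.Ideal A, J.IsPrime ∧ (a ≠ ⊥ → a ∉ J) := by
    intro a
    by_cases ha : a = ⊥
    · obtain ⟨J, hJ, _⟩ := exists_prime_ideal_notMem (⊤ : A) top_ne_bot
      exact ⟨J, hJ, fun h => absurd ha h⟩
    · obtain ⟨J, hJ, hn⟩ := exists_prime_ideal_notMem a ha
      exact ⟨J, hJ, fun _ => hn⟩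
  choose J hJprime hJnot using hex
  set T : Finset A := hSfin.toFinset with hT
  have hmemT : ∀ {s : A}, s ∈ T ↔ s ∈ S := fun {s} => hSfin.mem_toFinset
  have hTne : T.Nonempty := ⟨⊥, hmemT.mpr hbot⟩
  set ν : A → ℝ := fun a => ((T.filter fun s => a ∉ J s).card : ℝ) with hν
  have νnonneg : ∀ a, 0 ≤ ν a := fun a => Nat.cast_nonneg _
  have ν0 : ν ⊥ = 0 := by
    have : (T.filter fun s => (⊥ : A) ∉ J s) = ∅ := by
      rw [Finset.filter_eq_empty_iff]
      intro s _ h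
      exact h ((J s).bot_mem)
    simp [hν, this]
  have νmono : ∀ a b : A, a ≤ b → ν a ≤ ν b := by
    intro a b hab
    have : (T.filter fun s => a ∉ J s) ⊆ (T.filter fun s => b ∉ J s) := by
      intro s hs
      simp only [Finset.mem_filter] at hs ⊢
      exact ⟨hs.1, fun hb => hs.2 ((J s).lower hab hb)⟩
    simp only [hν]
    exact_mod_cast Finset.card_le_card this
  have νsub : ∀ a b : A, ν (a ⊔ b) ≤ ν a + ν b := by
    intro a b
    have hss : (T.filter fun s => a ⊔ b ∉ J s) ⊆
        (T.filter fun s => a ∉ J s) ∪ (T.filter fun s => b ∉ J s) := by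
      intro s hs
      simp only [Finset.mem_filter, Finset.mem_union] at hs ⊢
      by_cases ha : a ∈ J s
      · exact Or.inr ⟨hs.1, fun hb => hs.2 (Order.Ideal.sup_mem ha hb)⟩
      · exact Or.inl ⟨hs.1, ha⟩
    calc ν (a ⊔ b) ≤ (((T.filter fun s => a ∉ J s) ∪ (T.filter fun s => b ∉ J s)).card : ℝ) := by
          simp only [hν]
          exact_mod_cast Finset.card_le_card hss
      _ ≤ ν a + ν b := by
          simp only [hν]
          exact_mod_cast Finset.card_union_le _ _
  have νp : ∀ s ∈ S, p s ≤ ν s := by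
    intro s hs
    by_cases h0 : s = ⊥
    · subst h0; rw [hp0, ν0]
    · have h1 : s ∈ T.filter fun t => s ∉ J t :=
        Finset.mem_filter.mpr ⟨hmemT.mpr hs, hJnot s h0⟩
      have : (1 : ℝ) ≤ ν s := by
        have := Finset.card_pos.mpr ⟨s, h1⟩
        simp only [hν]
        exact_mod_cast this
      exact ((hprange s hs).1.2).trans this
  -- the extension
  set φ : A → ℝ := fun a => T.inf' hTne (fun s => p s + ν (a \ s)) with hφ
  have φ_le : ∀ (a : A), ∀ s ∈ S, φ a ≤ p s + ν (a \ s) := by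
    intro a s hs
    exact Finset.inf'_le _ (hmemT.mpr hs)
  have le_φ : ∀ (a : A) (c : ℝ), (∀ s ∈ S, c ≤ p s + ν (a \ s)) → c ≤ φ a := by
    intro a c h
    exact Finset.le_inf' _ _ fun s hs => h s (hmemT.mp hs)
  have φ_min : ∀ a : A, ∃ s ∈ S, φ a = p s + ν (a \ s) := by
    intro a
    obtain ⟨s, hs, hval⟩ := Finset.exists_mem_eq_inf' hTne (fun s => p s + ν (a \ s))
    exact ⟨s, hmemT.mp hs, hval⟩
  have φnonneg : ∀ a, 0 ≤ φ a := by
    intro a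
    refine le_φ a 0 fun s hs => add_nonneg (hprange s hs).1.1 (νnonneg _)
  have φ0 : φ ⊥ = 0 := by
    refine le_antisymm ?_ (φnonneg ⊥)
    have := φ_le ⊥ ⊥ hbot
    simpa [hp0, ν0] using this
  have φmono : ∀ a b : A, a ≤ b → φ a ≤ φ b := by
    intro a b hab
    obtain ⟨s, hs, hval⟩ := φ_min b
    rw [hval]
    calc φ a ≤ p s + ν (a \ s) := φ_le a s hs
      _ ≤ p s + ν (b \ s) := by
          gcongr
          exact νmono _ _ (sdiff_le_sdiff_right hab)
  have φext : ∀ a ∈ S, φ a = p a := by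
    intro a ha
    refine le_antisymm ?_ ?_
    · have := φ_le a a ha
      simpa [sdiff_self, ν0] using this
    · refine le_φ a (p a) fun s hs => ?_
      have hasS : a \ s ∈ S := by
        rw [sdiff_eq]
        exact hinf a ha sᶜ (hcompl s hs)
      calc p a ≤ p (s ⊔ a \ s) :=
            hpmono a ha _ (hsup s hs _ hasS) le_sup_sdiff
        _ ≤ p s + p (a \ s) := hpsub s hs _ hasS
        _ ≤ p s + ν (a \ s) := by gcongr; exact νp _ hasS
  have φ1 : φ ⊤ = 1 := by
    refine le_antisymm ?_ ?_
    · have := φ_le ⊤ ⊤ htop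
      simpa [hp1, sdiff_self, ν0] using this
    · refine le_φ ⊤ 1 fun s hs => ?_
      have hcs : sᶜ ∈ S := hcompl s hs
      calc (1 : ℝ) = p (s ⊔ sᶜ) := by rw [sup_compl_eq_top, hp1]
        _ ≤ p s + p sᶜ := hpsub s hs sᶜ hcs
        _ ≤ p s + ν (⊤ \ s) := by rw [top_sdiff']; gcongr; exact νp _ hcs
  have φsub : ∀ a b : A, φ (a ⊔ b) ≤ φ a + φ b := by
    intro a b
    obtain ⟨s, hs, hvs⟩ := φ_min a
    obtain ⟨t, ht, hvt⟩ := φ_min b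
    rw [hvs, hvt]
    have hst : s ⊔ t ∈ S := hsup s hs t ht
    calc φ (a ⊔ b) ≤ p (s ⊔ t) + ν ((a ⊔ b) \ (s ⊔ t)) := φ_le _ _ hst
      _ ≤ (p s + p t) + ν (a \ s ⊔ b \ t) := by
          gcongr
          · exact hpsub s hs t ht
          · refine νmono _ _ ?_
            rw [sup_sdiff]
            exact sup_le_sup (sdiff_le_sdiff le_rfl le_sup_left)
              (sdiff_le_sdiff le_rfl le_sup_right)
      _ ≤ (p s + p t) + (ν (a \ s) + ν (b \ t)) := by gcongr; exact νsub _ _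
      _ = (p s + ν (a \ s)) + (p t + ν (b \ t)) := by ring
  have φrange : ∀ a : A, (0 ≤ φ a ∧ φ a ≤ 1) ∧ ∃ q : ℚ, φ a = (q : ℝ) := by
    intro a
    refine ⟨⟨φnonneg a, ?_⟩, ?_⟩
    · calc φ a ≤ φ ⊤ := φmono a ⊤ le_top
        _ = 1 := φ1
    · obtain ⟨s, hs, hval⟩ := φ_min a
      obtain ⟨q, hq⟩ := (hprange s hs).2
      exact ⟨q + ((T.filter fun t => a \ s ∉ J t).card : ℚ), by simp only [hval, hq, hν]; push_cast; ring⟩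
  refine ⟨φ, φ0, φ1, φmono, φsub, φrange, φext, ?_⟩
  -- exhaustivity
  intro f hdisj
  have hB : {n : ℕ | ∃ s ∈ T, f n ∉ J s}.Finite := by
    have : {n : ℕ | ∃ s ∈ T, f n ∉ J s} ⊆ ⋃ s ∈ (T : Set A), {n : ℕ | f n ∉ J s} := by
      intro n hn
      obtain ⟨s, hs, hns⟩ := hn
      exact Set.mem_biUnion hs hns
    refine Set.Finite.subset (Set.Finite.biUnion T.finite_toSet fun s _ => ?_) this
    refine Set.Subsingleton.finite fun i hi j hj => ?_
    by_contra hij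
    have : f i ⊓ f j ∈ J s := by rw [hdisj i j hij]; exact (J s).bot_mem
    rcases (hJprime s).mem_or_mem this with h | h
    · exact hi h
    · exact hj h
  have hev : ∀ᶠ n in atTop, φ (f n) = 0 := by
    obtain ⟨N, hN⟩ := hB.bddAbove
    refine eventually_atTop.mpr ⟨N + 1, fun n hn => ?_⟩
    have hnB : n ∉ {n : ℕ | ∃ s ∈ T, f n ∉ J s} := fun hmem => by
      have := hN hmem; omega
    have hν0 : ν (f n) = 0 := by
      have : (T.filter fun s => f n ∉ J s) = ∅ := by
        rw [Finset.filter_eq_empty_iff]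
        intro s hs hns
        exact hnB ⟨s, hs, hns⟩
      simp [hν, this]
    refine le_antisymm ?_ (φnonneg _)
    have := φ_le (f n) ⊥ hbot
    simpa [hp0, sdiff_bot, hν0] using this
  exact Tendsto.congr' (hev.mono fun n hn => hn.symm) tendsto_const_nhds
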